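/- Assume: ‖(dH)_x v‖ ≤ l₀ e^{−n₀(λ−δ₂)} ‖v‖ for all v ∈ E^u_x; ‖(dH)_y v‖ ≤ l₀ e^{−n₀(λ−δ₂)} ‖v‖ for all v ∈ E^u_y; and ‖(dH)_y w‖ ≥ l₀^{−1} e^{−n₀(δ₀+δ₂)} ‖w‖ for all w ∈ E^{cs}_y. Then for every unit vector v ∈ E^u_x, writing v = v̂ + v^s with v̂ ∈ E^u_y and v^s ∈ E^{cs}_y, one has ‖v^s‖ ≤ (l₀² + l₀³) e^{−n₀(λ − 2δ₂ − δ₀)} + l₀ e^{n₀(δ₀+δ₂)} · C_{n₀} · ‖x − y‖, where C_{n₀} = n₀ l₀^{2n₀} e^{(2n₀² + n₀)δ₂}. -/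

import Mathlib

noncomputable section

/-- The composition `H_n = h_{n-1} ∘ ⋯ ∘ h_0`. -/
def compSeq {d : ℕ} (h : ℕ → EuclideanSpace ℝ (Fin d) → EuclideanSpace ℝ (Fin d)) :
    ℕ → EuclideanSpace ℝ (Fin d) → EuclideanSpace ℝ (Fin d)
  | 0 => id
  | n + 1 => (h n) ∘ (compSeq h n)

/-!
The derivative of `H = h_{n₀-1} ∘ ⋯ ∘ h₀` is the product of the `Dh i` along the orbit. With a
uniform bound `K ≥ 1` on the norms and Lipschitz constants of the `Dh i`, `H` is `K^n`-Lipschitz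
and `dH` is `n K^{2n}`-Lipschitz; for `K = l₀ e^{n₀δ₂}` this gives
`‖dH_x - dH_y‖ ≤ C_{n₀} ‖x - y‖`. Write `v = v̂ + vˢ`. Then `dH_y vˢ = dH_y v - dH_y v̂`, where
`dH_y v` is close to the small vector `dH_x v` and `dH_y v̂` is small since `v̂ ∈ E^u_y`; the lower
bound for `dH_y` on `E^{cs}_y` turns this into the bound for `‖vˢ‖`.
-/

open scoped NNReal

section LinearEstimate

variable {E : Type*} [NormedAddCommGroup E] [NormedSpace ℝ E]

theorem proj_mem_and_sub_proj_mem_of_isCompl {U W : Submodule ℝ E} (hUW : IsCompl U W)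
    (π : E →ₗ[ℝ] E) (hπU : ∀ v ∈ U, π v = v) (hπW : ∀ v ∈ W, π v = 0) (v : E) :
    π v ∈ U ∧ v - π v ∈ W := by
  obtain ⟨a, ha, b, hb, rfl⟩ :=
    Submodule.mem_sup.mp (show v ∈ U ⊔ W from hUW.sup_eq_top ▸ Submodule.mem_top)
  have hπv : π (a + b) = a := by rw [map_add, hπU a ha, hπW b hb, add_zero]
  rw [hπv, add_sub_cancel_left]
  exact ⟨ha, hb⟩

theorem norm_sub_proj_le_of_expansion (A B π : E →L[ℝ] E) (v : E) {α β c : ℝ}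
    (hc : 0 < c) (hβ : 0 ≤ β) (hAv : ‖A v‖ ≤ α * ‖v‖) (hBπ : ‖B (π v)‖ ≤ β * ‖π v‖)
    (hBs : c * ‖v - π v‖ ≤ ‖B (v - π v)‖) :
    ‖v - π v‖ ≤ c⁻¹ * ((α + β * ‖π‖ + ‖A - B‖) * ‖v‖) := by
  rw [le_inv_mul_iff₀ hc]
  have hBv : ‖B v‖ ≤ ‖A v‖ + ‖A - B‖ * ‖v‖ := by
    calc ‖B v‖ = ‖A v - (A - B) v‖ := by rw [sub_apply, sub_sub_cancel]
      _ ≤ ‖A v‖ + ‖A - B‖ * ‖v‖ := (norm_sub_le _ _).trans (by gcongr; exact (A - B).le_opNorm v)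
  calc c * ‖v - π v‖ ≤ ‖B v - B (π v)‖ := by rwa [← map_sub]
    _ ≤ ‖B v‖ + ‖B (π v)‖ := norm_sub_le _ _
    _ ≤ (α * ‖v‖ + ‖A - B‖ * ‖v‖) + β * (‖π‖ * ‖v‖) := by
        gcongr
        · exact hBv.trans (by gcongr)
        · exact hBπ.trans (by gcongr; exact π.le_opNorm v)
    _ = (α + β * ‖π‖ + ‖A - B‖) * ‖v‖ := by ring

end LinearEstimate

theorem LipschitzWith.clm_comp {𝕜 α E F G : Type*} [NontriviallyNormedField 𝕜]
    [PseudoMetricSpace α] [SeminormedAddCommGroup E] [SeminormedAddCommGroup F]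
    [SeminormedAddCommGroup G] [NormedSpace 𝕜 E] [NormedSpace 𝕜 F] [NormedSpace 𝕜 G]
    {f : α → F →L[𝕜] G} {g : α → E →L[𝕜] F} {Lf Lg Cf Cg : ℝ≥0}
    (hf : LipschitzWith Lf f) (hg : LipschitzWith Lg g)
    (hfC : ∀ a, ‖f a‖₊ ≤ Cf) (hgC : ∀ a, ‖g a‖₊ ≤ Cg) :
    LipschitzWith (Cf * Lg + Lf * Cg) fun a ↦ (f a).comp (g a) := by
  refine LipschitzWith.of_dist_le_mul fun a b ↦ ?_
  have hsplit : (f a).comp (g a) - (f b).comp (g b) =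
      (f a).comp (g a - g b) + (f a - f b).comp (g b) := by
    simp only [ContinuousLinearMap.comp_sub, ContinuousLinearMap.sub_comp]
    abel
  rw [dist_eq_norm, hsplit]
  calc ‖(f a).comp (g a - g b) + (f a - f b).comp (g b)‖
      ≤ ‖f a‖ * ‖g a - g b‖ + ‖f a - f b‖ * ‖g b‖ :=
        (norm_add_le _ _).trans (add_le_add (ContinuousLinearMap.opNorm_comp_le _ _)
          (ContinuousLinearMap.opNorm_comp_le _ _))
    _ ≤ Cf * (Lg * dist a b) + Lf * dist a b * Cg := by
        rw [← dist_eq_norm, ← dist_eq_norm]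
        gcongr
        exacts [hfC a, hg.dist_le_mul a b, hf.dist_le_mul a b, hgC b]
    _ = ↑(Cf * Lg + Lf * Cg) * dist a b := by push_cast; ring

section CompSeq

variable {d : ℕ} {h : ℕ → EuclideanSpace ℝ (Fin d) → EuclideanSpace ℝ (Fin d)}
  {Dh : ℕ → EuclideanSpace ℝ (Fin d) → EuclideanSpace ℝ (Fin d) →L[ℝ] EuclideanSpace ℝ (Fin d)}
  {n : ℕ} {K : ℝ≥0}

variable (h Dh) in
def compSeqDeriv :
    ℕ → EuclideanSpace ℝ (Fin d) → EuclideanSpace ℝ (Fin d) →L[ℝ] EuclideanSpace ℝ (Fin d)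
  | 0, _ => ContinuousLinearMap.id ℝ _
  | n + 1, z => (Dh n (compSeq h n z)).comp (compSeqDeriv n z)

theorem hasFDerivAt_compSeq (hderiv : ∀ i < n, ∀ z, HasFDerivAt (h i) (Dh i z) z) (z) :
    HasFDerivAt (compSeq h n) (compSeqDeriv h Dh n z) z := by
  induction n generalizing z with
  | zero => exact hasFDerivAt_id z
  | succ n ih =>
    exact (hderiv n n.lt_succ_self _).comp z (ih (fun i hi ↦ hderiv i (hi.trans n.lt_succ_self)) z)

theorem nnnorm_compSeqDeriv_le (hbound : ∀ i < n, ∀ z, ‖Dh i z‖₊ ≤ K) (z) :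
    ‖compSeqDeriv h Dh n z‖₊ ≤ K ^ n := by
  induction n with
  | zero => exact ContinuousLinearMap.norm_id_le
  | succ n ih =>
    rw [pow_succ']
    exact (ContinuousLinearMap.opNNNorm_comp_le _ _).trans (mul_le_mul'
      (hbound n n.lt_succ_self _) (ih fun i hi ↦ hbound i (hi.trans n.lt_succ_self)))

theorem lipschitzWith_compSeq (hderiv : ∀ i < n, ∀ z, HasFDerivAt (h i) (Dh i z) z)
    (hbound : ∀ i < n, ∀ z, ‖Dh i z‖₊ ≤ K) : LipschitzWith (K ^ n) (compSeq h n) := by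
  induction n with
  | zero => exact LipschitzWith.id
  | succ n ih =>
    have hlip_n : LipschitzWith K (h n) :=
      lipschitzWith_of_nnnorm_fderiv_le (fun z ↦ (hderiv n n.lt_succ_self z).differentiableAt)
        fun z ↦ (hderiv n n.lt_succ_self z).fderiv ▸ hbound n n.lt_succ_self z
    rw [pow_succ']
    exact hlip_n.comp (ih (fun i hi ↦ hderiv i (hi.trans n.lt_succ_self))
      fun i hi ↦ hbound i (hi.trans n.lt_succ_self))

theorem lipschitzWith_compSeqDeriv (hK : 1 ≤ K)
    (hderiv : ∀ i < n, ∀ z, HasFDerivAt (h i) (Dh i z) z)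
    (hbound : ∀ i < n, ∀ z, ‖Dh i z‖₊ ≤ K) (hlip : ∀ i < n, LipschitzWith K (Dh i)) :
    LipschitzWith (n * K ^ (2 * n)) (compSeqDeriv h Dh n) := by
  induction n with
  | zero => simp only [CharP.cast_eq_zero, zero_mul]; exact LipschitzWith.const' _
  | succ n ih =>
    have hderiv' : ∀ i < n, ∀ z, HasFDerivAt (h i) (Dh i z) z :=
      fun i hi ↦ hderiv i (hi.trans n.lt_succ_self)
    have hbound' : ∀ i < n, ∀ z, ‖Dh i z‖₊ ≤ K := fun i hi ↦ hbound i (hi.trans n.lt_succ_self)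
    have hcomp := ((hlip n n.lt_succ_self).comp (lipschitzWith_compSeq hderiv' hbound')).clm_comp
      (ih hderiv' hbound' fun i hi ↦ hlip i (hi.trans n.lt_succ_self))
      (fun z ↦ hbound n n.lt_succ_self (compSeq h n z)) (nnnorm_compSeqDeriv_le hbound')
    refine hcomp.weaken ?_
    have hK2 : K ^ (2 * n + 1) ≤ K ^ (2 * (n + 1)) := pow_le_pow_right₀ hK (by omega)
    calc K * (n * K ^ (2 * n)) + K * K ^ n * K ^ n = (n + 1) * K ^ (2 * n + 1) := by ring
      _ ≤ ((n + 1 : ℕ) : ℝ≥0) * K ^ (2 * (n + 1)) := by push_cast; gcongr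

theorem norm_compSeqDeriv_sub_le {δ2 l0 : ℝ} (hδ2 : 0 ≤ δ2) (hl0 : 1 ≤ l0)
    (hderiv : ∀ i < n, ∀ z, HasFDerivAt (h i) (Dh i z) z)
    (hbound : ∀ i < n, ∀ z, ‖Dh i z‖ ≤ Real.exp ((i : ℝ) * δ2) * l0)
    (hlip : ∀ i < n, LipschitzWith (Real.exp ((i : ℝ) * δ2) * l0).toNNReal (Dh i))
    (x y : EuclideanSpace ℝ (Fin d)) :
    ‖compSeqDeriv h Dh n x - compSeqDeriv h Dh n y‖ ≤
      n * l0 ^ (2 * n) * Real.exp (((2 * n ^ 2 + n : ℕ) : ℝ) * δ2) * ‖x - y‖ := by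
  set K : ℝ≥0 := (Real.exp ((n : ℝ) * δ2) * l0).toNNReal
  have hK_coe : (K : ℝ) = Real.exp ((n : ℝ) * δ2) * l0 := Real.coe_toNNReal _ (by positivity)
  have hK : 1 ≤ K := by
    rw [← NNReal.coe_le_coe, hK_coe, NNReal.coe_one]
    exact one_le_mul_of_one_le_of_one_le (Real.one_le_exp (by positivity)) hl0
  have hexp_le : ∀ i < n, Real.exp ((i : ℝ) * δ2) * l0 ≤ K := fun i hi ↦ by
    rw [hK_coe]
    exact mul_le_mul_of_nonneg_right (Real.exp_le_exp.mpr (by gcongr)) (by linarith)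
  have hbound' : ∀ i < n, ∀ z, ‖Dh i z‖₊ ≤ K := fun i hi z ↦ by
    rw [← NNReal.coe_le_coe, coe_nnnorm]; exact (hbound i hi z).trans (hexp_le i hi)
  have hlip' : ∀ i < n, LipschitzWith K (Dh i) := fun i hi ↦
    (hlip i hi).weaken (Real.toNNReal_le_iff_le_coe.mpr (hexp_le i hi))
  have hconst : (n : ℝ) * K ^ (2 * n) ≤
      n * l0 ^ (2 * n) * Real.exp (((2 * n ^ 2 + n : ℕ) : ℝ) * δ2) := by
    rw [hK_coe, mul_pow, ← Real.exp_nat_mul, mul_comm (Real.exp _), ← mul_assoc]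
    gcongr (n : ℝ) * l0 ^ (2 * n) * Real.exp ?_
    push_cast
    nlinarith
  rw [← dist_eq_norm, ← dist_eq_norm]
  calc dist (compSeqDeriv h Dh n x) (compSeqDeriv h Dh n y) ≤ n * K ^ (2 * n) * dist x y := by
        exact_mod_cast (lipschitzWith_compSeqDeriv hK hderiv hbound' hlip').dist_le_mul x y
    _ ≤ _ := by gcongr

end CompSeq

theorem unstable_subspace_continuity_estimate_general
    (d : ℕ) (lam δ0 δ2 l0 : ℝ) (n0 : ℕ)
    (hδ2 : 0 ≤ δ2) (hl0 : 1 ≤ l0)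
    (h : ℕ → EuclideanSpace ℝ (Fin d) → EuclideanSpace ℝ (Fin d))
    (Dh : ℕ → EuclideanSpace ℝ (Fin d) →
      (EuclideanSpace ℝ (Fin d) →L[ℝ] EuclideanSpace ℝ (Fin d)))
    (hderiv : ∀ i < n0, ∀ z, HasFDerivAt (h i) (Dh i z) z)
    (hbound : ∀ i < n0, ∀ z, ‖Dh i z‖ ≤ Real.exp ((i : ℝ) * δ2) * l0)
    (hlip : ∀ i < n0, LipschitzWith (Real.exp ((i : ℝ) * δ2) * l0).toNNReal (Dh i))
    (x y : EuclideanSpace ℝ (Fin d))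
    (Eux Euy Ecsy : Submodule ℝ (EuclideanSpace ℝ (Fin d)))
    (hcompl : IsCompl Euy Ecsy)
    (πuy : EuclideanSpace ℝ (Fin d) →L[ℝ] EuclideanSpace ℝ (Fin d))
    (hπ1 : ∀ v ∈ Euy, πuy v = v) (hπ2 : ∀ v ∈ Ecsy, πuy v = 0)
    (hπnorm : ‖πuy‖ ≤ l0)
    (DHx DHy : EuclideanSpace ℝ (Fin d) →L[ℝ] EuclideanSpace ℝ (Fin d))
    (hDHx : HasFDerivAt (compSeq h n0) DHx x)
    (hDHy : HasFDerivAt (compSeq h n0) DHy y)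
    (hux : ∀ v ∈ Eux, ‖DHx v‖ ≤ l0 * Real.exp (-((n0 : ℝ) * (lam - δ2))) * ‖v‖)
    (huy : ∀ v ∈ Euy, ‖DHy v‖ ≤ l0 * Real.exp (-((n0 : ℝ) * (lam - δ2))) * ‖v‖)
    (hcsy : ∀ w ∈ Ecsy, l0⁻¹ * Real.exp (-((n0 : ℝ) * (δ0 + δ2))) * ‖w‖ ≤ ‖DHy w‖) :
    ∀ v ∈ Eux, ‖v‖ = 1 →
      ‖v - πuy v‖ ≤
        (l0 ^ 2 + l0 ^ 3) * Real.exp (-((n0 : ℝ) * (lam - 2 * δ2 - δ0))) +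
        l0 * Real.exp ((n0 : ℝ) * (δ0 + δ2)) *
          ((n0 : ℝ) * l0 ^ (2 * n0) * Real.exp (((2 * n0 ^ 2 + n0 : ℕ) : ℝ) * δ2)) *
          ‖x - y‖ := by
  intro v hv hv1
  have hdiff : ‖DHx - DHy‖ ≤
      n0 * l0 ^ (2 * n0) * Real.exp (((2 * n0 ^ 2 + n0 : ℕ) : ℝ) * δ2) * ‖x - y‖ := by
    rw [hDHx.unique (hasFDerivAt_compSeq hderiv x), hDHy.unique (hasFDerivAt_compSeq hderiv y)]
    exact norm_compSeqDeriv_sub_le hδ2 hl0 hderiv hbound hlip x y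
  obtain ⟨hπv, hvs⟩ := proj_mem_and_sub_proj_mem_of_isCompl hcompl πuy.toLinearMap hπ1 hπ2 v
  have hvs_le := norm_sub_proj_le_of_expansion DHx DHy πuy v (by positivity) (by positivity)
    (hux v hv) (huy _ hπv) (hcsy _ hvs)
  rw [mul_inv, inv_inv, ← Real.exp_neg, neg_neg, hv1, mul_one] at hvs_le
  calc ‖v - πuy v‖ ≤ l0 * Real.exp ((n0 : ℝ) * (δ0 + δ2)) *
        (l0 * Real.exp (-((n0 : ℝ) * (lam - δ2))) * (1 + l0) +
          n0 * l0 ^ (2 * n0) * Real.exp (((2 * n0 ^ 2 + n0 : ℕ) : ℝ) * δ2) * ‖x - y‖) := by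
        refine hvs_le.trans ?_
        gcongr
        linarith [mul_le_mul_of_nonneg_left hπnorm
          (by positivity : 0 ≤ l0 * Real.exp (-((n0 : ℝ) * (lam - δ2))))]
    _ = (l0 ^ 2 + l0 ^ 3) *
          (Real.exp ((n0 : ℝ) * (δ0 + δ2)) * Real.exp (-((n0 : ℝ) * (lam - δ2)))) +
        l0 * Real.exp ((n0 : ℝ) * (δ0 + δ2)) *
          (n0 * l0 ^ (2 * n0) * Real.exp (((2 * n0 ^ 2 + n0 : ℕ) : ℝ) * δ2)) * ‖x - y‖ := by
        ring
    _ = _ := by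
        rw [← Real.exp_add, show (n0 : ℝ) * (δ0 + δ2) + -((n0 : ℝ) * (lam - δ2)) =
          -((n0 : ℝ) * (lam - 2 * δ2 - δ0)) by ring]

/-- Quantitative continuity of unstable subspaces for orbits sharing a finite past
(the estimate in the proof of Proposition 2.3(b)): if the backward composition `H`
contracts `E^u_x` and `E^u_y` and expands no worse than `l₀⁻¹ e^{-n₀(δ₀+δ₂)}` on
`E^{cs}_y`, then the `E^{cs}_y`-component `v^s = v - π^u_y v` of any unit vector
`v ∈ E^u_x` satisfies the stated bound. -/
theorem unstable_subspace_continuity_estimate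
    (d : ℕ) (hd : 1 ≤ d) (lam δ0 δ2 l0 : ℝ) (n0 : ℕ)
    (hlam : 0 < lam) (hδ0 : 0 ≤ δ0) (hδ2 : 0 ≤ δ2) (hl0 : 1 ≤ l0) (hn0 : 1 ≤ n0)
    (h : ℕ → EuclideanSpace ℝ (Fin d) → EuclideanSpace ℝ (Fin d))
    (Dh : ℕ → EuclideanSpace ℝ (Fin d) →
      (EuclideanSpace ℝ (Fin d) →L[ℝ] EuclideanSpace ℝ (Fin d)))
    (hderiv : ∀ i < n0, ∀ z, HasFDerivAt (h i) (Dh i z) z)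
    (hbound : ∀ i < n0, ∀ z, ‖Dh i z‖ ≤ Real.exp ((i : ℝ) * δ2) * l0)
    (hlip : ∀ i < n0, LipschitzWith (Real.exp ((i : ℝ) * δ2) * l0).toNNReal (Dh i))
    (x y : EuclideanSpace ℝ (Fin d))
    (Eux Euy Ecsy : Submodule ℝ (EuclideanSpace ℝ (Fin d)))
    (hcompl : IsCompl Euy Ecsy)
    (πuy : EuclideanSpace ℝ (Fin d) →L[ℝ] EuclideanSpace ℝ (Fin d))
    (hπ1 : ∀ v ∈ Euy, πuy v = v) (hπ2 : ∀ v ∈ Ecsy, πuy v = 0)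
    (hπnorm : ‖πuy‖ ≤ l0)
    (DHx DHy : EuclideanSpace ℝ (Fin d) →L[ℝ] EuclideanSpace ℝ (Fin d))
    (hDHx : HasFDerivAt (compSeq h n0) DHx x)
    (hDHy : HasFDerivAt (compSeq h n0) DHy y)
    (hux : ∀ v ∈ Eux, ‖DHx v‖ ≤ l0 * Real.exp (-((n0 : ℝ) * (lam - δ2))) * ‖v‖)
    (huy : ∀ v ∈ Euy, ‖DHy v‖ ≤ l0 * Real.exp (-((n0 : ℝ) * (lam - δ2))) * ‖v‖)
    (hcsy : ∀ w ∈ Ecsy, l0⁻¹ * Real.exp (-((n0 : ℝ) * (δ0 + δ2))) * ‖w‖ ≤ ‖DHy w‖) :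
    ∀ v ∈ Eux, ‖v‖ = 1 →
      ‖v - πuy v‖ ≤
        (l0 ^ 2 + l0 ^ 3) * Real.exp (-((n0 : ℝ) * (lam - 2 * δ2 - δ0))) +
        l0 * Real.exp ((n0 : ℝ) * (δ0 + δ2)) *
          ((n0 : ℝ) * l0 ^ (2 * n0) * Real.exp (((2 * n0 ^ 2 + n0 : ℕ) : ℝ) * δ2)) *
          ‖x - y‖ :=
  unstable_subspace_continuity_estimate_general d lam δ0 δ2 l0 n0 hδ2 hl0 h Dh hderiv hbound hlip x
    y Eux Euy Ecsy hcompl πuy hπ1 hπ2 hπnorm DHx DHy hDHx hDHy hux huy hcsy
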